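/- Let k be a field, let φ : H → H̄ be a surjective homomorphism of finite groups, let K̄ be a subgroup of H̄, and let K = φ⁻¹(K̄). Regard k[K̄] as a k[K]-module via the restriction of φ to K. Then the canonical map k[H] ⊗_{k[K]} k[K̄] → k[H̄], given by h ⊗ x ↦ φ(h)·x, is an isomorphism of left k[H]-modules (where k[H̄] is a k[H]-module via φ). -/

import Mathlib

open TensorProduct

/-- An isomorphism of `k[G]`-modules: a `G`-equivariant `k`-linear equivalence
between the underlying spaces of two representations of `G` over `k`. -/
def RepIso {k G V W : Type*} [Field k] [Group G]
    [AddCommGroup V] [Module k V] [AddCommGroup W] [Module k W]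
    (ρ : Representation k G V) (τ : Representation k G W) : Prop :=
  ∃ e : V ≃ₗ[k] W, ∀ (g : G) (v : V), e (ρ g v) = τ g (e v)

/-- The (left) regular representation of `H` on the group algebra `k[H]`,
given by left multiplication. -/
noncomputable def regRep (k : Type*) [Field k] (H : Type*) [Group H] :
    Representation k H (MonoidAlgebra k H) :=
  Representation.ofMulAction k H H

lemma regRep_single {k : Type*} [Field k] {H : Type*} [Group H] (h x : H) (r : k) :
    regRep k H h (MonoidAlgebra.single x r) = MonoidAlgebra.single (h * x) r :=
  Representation.ofMulAction_single h x r

section Ind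

variable (k : Type*) [Field k] {H : Type*} [Group H] (K : Subgroup H)
  {M : Type*} [AddCommGroup M] [Module k M] (ρ : Representation k K M)

/-- The submodule of relations defining `k[H] ⊗_{k[K]} M` as a quotient of
`k[H] ⊗_k M`: it is generated by the elements `(h·c) ⊗ m - h ⊗ (c·m)`
for `h ∈ H`, `c ∈ K`, `m ∈ M`. -/
noncomputable def indRel : Submodule k (MonoidAlgebra k H ⊗[k] M) :=
  Submodule.span k {v | ∃ (h : H) (c : K) (m : M),
    v = MonoidAlgebra.single (h * (c : H)) (1 : k) ⊗ₜ[k] m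
      - MonoidAlgebra.single h (1 : k) ⊗ₜ[k] (ρ c m)}

/-- The underlying space of the induced module `Ind_K^H M := k[H] ⊗_{k[K]} M`,
realized as the quotient of `k[H] ⊗_k M` by the relations `(h·c) ⊗ m = h ⊗ (c·m)`. -/
abbrev IndV := (MonoidAlgebra k H ⊗[k] M) ⧸ indRel k K ρ

noncomputable instance IndV.instAddCommMonoid : AddCommMonoid (IndV k K ρ) :=
  AddCommGroup.toAddCommMonoid

lemma indRel_le (h : H) :
    indRel k K ρ ≤ (indRel k K ρ).comap
      (((regRep k H).tprod (Representation.trivial k (G := H) (V := M))) h) := by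
  rw [indRel, Submodule.span_le]
  rintro v ⟨h', c, m, rfl⟩
  simp only [SetLike.mem_coe, Submodule.mem_comap, map_sub, Representation.tprod_apply,
    TensorProduct.map_tmul, regRep_single, Representation.trivial_apply]
  apply Submodule.subset_span
  exact ⟨h * h', c, m, by rw [mul_assoc]⟩

/-- The induced representation `Ind_K^H M := k[H] ⊗_{k[K]} M` of `H`, where `H` acts
through left multiplication on the group algebra factor `k[H]`. -/
noncomputable def ind : Representation k H (IndV k K ρ) where
  toFun h := Submodule.mapQ _ _
    (((regRep k H).tprod (Representation.trivial k (G := H) (V := M))) h)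
    (indRel_le k K ρ h)
  map_one' := by
    apply Submodule.linearMap_qext
    ext x
    simp [Submodule.mapQ_apply]
  map_mul' g h := by
    apply Submodule.linearMap_qext
    ext x
    simp [Submodule.mapQ_apply]

end Ind

section Aux

variable {k : Type*} [Field k]

/-- The subrepresentation of a representation on an invariant submodule. -/
noncomputable def subRep {G M : Type*} [Group G] [AddCommGroup M] [Module k M]
    (ρ : Representation k G M) (p : Submodule k M)
    (hp : ∀ (g : G), ∀ x ∈ p, ρ g x ∈ p) : Representation k G p where
  toFun g := (ρ g).restrict (hp g)
  map_one' := by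
    ext x
    simp [LinearMap.restrict_apply]
  map_mul' g h := by
    ext x
    simp [LinearMap.restrict_apply]

/-- The direct sum of a family of representations. -/
noncomputable def repPi {G : Type*} [Group G] {ι : Type*} {V : ι → Type*}
    [∀ i, AddCommGroup (V i)] [∀ i, Module k (V i)]
    (ρ : ∀ i, Representation k G (V i)) : Representation k G (∀ i, V i) where
  toFun g := LinearMap.pi fun i => (ρ i g).comp (LinearMap.proj i)
  map_one' := by
    ext x i
    simp
  map_mul' g h := by
    ext x i
    simp

/-- The direct sum of `n` copies of a representation. -/
noncomputable def repPow {G V : Type*} [Group G] [AddCommGroup V] [Module k V]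
    (ρ : Representation k G V) (n : ℕ) : Representation k G (Fin n → V) :=
  repPi fun _ => ρ

/-- The direct sum of two representations. -/
noncomputable def repProd {G V W : Type*} [Group G] [AddCommGroup V] [Module k V]
    [AddCommGroup W] [Module k W]
    (ρ : Representation k G V) (τ : Representation k G W) :
    Representation k G (V × W) where
  toFun g := (ρ g).prodMap (τ g)
  map_one' := by ext x <;> simp
  map_mul' g h := by ext x <;> simp

/-- The one-dimensional representation attached to a character `χ : G →* kˣ`. -/
noncomputable def charRep {G : Type*} [Group G] (χ : G →* kˣ) : Representation k G k where
  toFun g := (χ g : k) • LinearMap.id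
  map_one' := by
    simp only [map_one, Units.val_one, one_smul]
    rfl
  map_mul' g h := by
    apply LinearMap.ext
    intro x
    simp [mul_assoc]
    ring

/-- The stabilizer of `i ∈ {1, …, n}` for an action of `G` on `Fin n` given by
a homomorphism to the permutation group. -/
def permStab {G : Type*} [Group G] {n : ℕ} (a : G →* Equiv.Perm (Fin n)) (i : Fin n) :
    Subgroup G where
  carrier := {g | a g i = i}
  one_mem' := by simp
  mul_mem' := by
    intro x y hx hy
    simp only [Set.mem_setOf_eq, map_mul] at *
    rw [Equiv.Perm.mul_apply, hy, hx]
  inv_mem' := by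
    intro x hx
    simp only [Set.mem_setOf_eq] at *
    conv_lhs => rw [← hx]
    rw [map_inv]
    simp

end Aux

section CanMap

variable (k : Type*) [Field k] {G M : Type*} [Group G] [AddCommGroup M] [Module k M]

/-- The canonical map `Ind_K^G p = k[G] ⊗_{k[K]} p → M`, `g ⊗ x ↦ g·x`, defined for a
`K`-invariant submodule `p` of a `G`-module `M`. -/
noncomputable def indToMod (ρ : Representation k G M) (K : Subgroup G) (p : Submodule k M)
    (hp : ∀ (c : ↥K), ∀ x ∈ p, (ρ.comp K.subtype) c x ∈ p) :
    IndV k K (subRep (ρ.comp K.subtype) p hp) →ₗ[k] M :=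
  Submodule.liftQ _
    (TensorProduct.lift
      ((LinearMap.lcomp k M p.subtype).comp ρ.asAlgebraHom.toLinearMap))
    (by
      rw [indRel, Submodule.span_le]
      rintro v ⟨h, c, m, rfl⟩
      simp only [SetLike.mem_coe, LinearMap.mem_ker, map_sub, TensorProduct.lift.tmul,
        LinearMap.coe_comp, Function.comp_apply, AlgHom.toLinearMap_apply,
        Representation.asAlgebraHom_single, one_smul,
        LinearMap.lcomp_apply, subRep, MonoidHom.coe_mk, OneHom.coe_mk,
        LinearMap.restrict_coe_apply, MonoidHom.coe_comp, Subgroup.coe_subtype,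
        map_mul, Module.End.mul_apply, Submodule.coe_subtype, sub_eq_zero])

end CanMap

section Stmt6

variable (k : Type*) [Field k] {H H' : Type*} [Group H] [Group H']

lemma regRep_eq_single_mul {G : Type*} [Group G] (g : G) (x : MonoidAlgebra k G) :
    regRep k G g x = MonoidAlgebra.single g 1 * x := by
  induction x using MonoidAlgebra.induction_linear with
  | zero => simp
  | add f₁ f₂ h₁ h₂ => rw [map_add, mul_add, h₁, h₂]
  | single a b =>
    rw [regRep_single, MonoidAlgebra.single_mul_single, one_mul]

lemma mapDomainAlgHom_single' {G G' : Type*} [Group G] [Group G'] (f : G →* G')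
    (a : G) (b : k) :
    MonoidAlgebra.mapDomainAlgHom k k f (MonoidAlgebra.single a b)
      = MonoidAlgebra.single (f a) b := by
  simp

/-- The `k`-bilinear map `k[H] × k[K'] → k[H']`, `(y, x) ↦ φ(y)·x`, extending
`(h, c) ↦ φ(h)·c` for `h ∈ H` and `c ∈ K' ≤ H'`. -/
noncomputable def canBil (φ : H →* H') (K' : Subgroup H') :
    MonoidAlgebra k H →ₗ[k] MonoidAlgebra k (↥K') →ₗ[k] MonoidAlgebra k H' :=
  LinearMap.mk₂ k
    (fun y x => (MonoidAlgebra.mapDomainAlgHom k k φ y)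
      * (MonoidAlgebra.mapDomainAlgHom k k K'.subtype x))
    (fun y₁ y₂ x => by simp only [map_add, add_mul])
    (fun c y x => by simp only [map_smul, smul_mul_assoc])
    (fun y x₁ x₂ => by simp only [map_add, mul_add])
    (fun c y x => by simp only [map_smul, mul_smul_comm])

/-- The representation of `K = φ⁻¹(K')` on the group algebra `k[K']`, obtained by
restricting the regular representation of `K'` along `φ|_K : K → K'`. -/
noncomputable def resReg (φ : H →* H') (K' : Subgroup H') :
    Representation k (↥(K'.comap φ)) (MonoidAlgebra k (↥K')) :=
  (regRep k (↥K')).comp ((φ.domRestrict (K'.comap φ)).codRestrict K' fun x => x.2)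

/-- The canonical map `k[H] ⊗_{k[K]} k[K'] → k[H']`, `h ⊗ x ↦ φ(h)·x`, where
`K = φ⁻¹(K')` and `k[H']` is a `k[H]`-module via `φ`. -/
noncomputable def canMap (φ : H →* H') (K' : Subgroup H') :
    IndV k (K'.comap φ) (resReg k φ K') →ₗ[k] MonoidAlgebra k H' :=
  Submodule.liftQ _ (TensorProduct.lift (canBil k φ K')) (by
    rw [indRel, Submodule.span_le]
    rintro v ⟨h, c, m, rfl⟩
    simp only [SetLike.mem_coe, LinearMap.mem_ker, map_sub, TensorProduct.lift.tmul,
      canBil, LinearMap.mk₂_apply, sub_eq_zero, resReg, MonoidHom.coe_comp,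
      Function.comp_apply, regRep_eq_single_mul, mapDomainAlgHom_single',
      MonoidHom.codRestrict_apply, MonoidHom.domRestrict_apply, Subgroup.coe_subtype, map_mul]
    rw [← mul_assoc, MonoidAlgebra.single_mul_single, one_mul]
    rfl)

/-! The inverse sends `h̄ ∈ H̄` to `g ⊗ 1` for any `g` with `φ g = h̄`. It does not depend on the
choice of `g`, and it inverts the canonical map on generators `h ⊗ c`, because `φ g = φ h * c` with
`c ∈ K̄` forces `h⁻¹ * g ∈ K = φ⁻¹(K̄)`, whence `g ⊗ 1 = h ⊗ φ (h⁻¹ * g) = h ⊗ c`. -/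

section

variable {k}

open MonoidAlgebra

theorem IndV.hom_ext {K : Subgroup H} {L : Type*} [Monoid L]
    {ρ : Representation k K (MonoidAlgebra k L)} {N : Type*} [AddCommGroup N] [Module k N]
    {f g : IndV k K ρ →ₗ[k] N}
    (hfg : ∀ (h : H) (l : L), f (Submodule.Quotient.mk (single h 1 ⊗ₜ single l 1))
      = g (Submodule.Quotient.mk (single h 1 ⊗ₜ single l 1))) : f = g :=
  Submodule.linearMap_qext _ <| TensorProduct.ext <| lhom_ext' fun h => LinearMap.ext_ring <|
    lhom_ext' fun l => LinearMap.ext_ring (hfg h l)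

theorem IndV.mk_single_mul_tmul {K : Subgroup H} {M : Type*} [AddCommGroup M] [Module k M]
    {ρ : Representation k K M} (h : H) (c : K) (m : M) :
    (Submodule.Quotient.mk (single (h * c) 1 ⊗ₜ m) : IndV k K ρ)
      = Submodule.Quotient.mk (single h 1 ⊗ₜ ρ c m) :=
  (Submodule.Quotient.eq _).2 <| Submodule.subset_span ⟨h, c, m, rfl⟩

theorem ind_mk_single_tmul {K : Subgroup H} {M : Type*} [AddCommGroup M] [Module k M]
    (ρ : Representation k K M) (h g : H) (r : k) (m : M) :
    ind k K ρ h (Submodule.Quotient.mk (single g r ⊗ₜ m))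
      = Submodule.Quotient.mk (single (h * g) r ⊗ₜ m) := by
  simp [ind, Submodule.mapQ_apply, regRep_single]

theorem resReg_single (φ : H →* H') (K' : Subgroup H') (c : K'.comap φ) (x : K') (r : k) :
    resReg k φ K' c (single x r) = single (⟨φ c, c.2⟩ * x) r :=
  regRep_single _ x r

theorem canMap_mk_single_tmul_single (φ : H →* H') (K' : Subgroup H') (h : H) (c : K') :
    canMap k φ K' (Submodule.Quotient.mk (single h 1 ⊗ₜ single c 1))
      = single (φ h * c) 1 := by
  simp [canMap, canBil]

theorem mk_single_tmul_single_one_of_map_eq (φ : H →* H') (K' : Subgroup H') {g h : H} {c : K'}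
    (hgh : φ g = φ h * c) :
    (Submodule.Quotient.mk (single g 1 ⊗ₜ single 1 1) : IndV k (K'.comap φ) (resReg k φ K'))
      = Submodule.Quotient.mk (single h 1 ⊗ₜ single c 1) := by
  have hmem : h⁻¹ * g ∈ K'.comap φ := by simp [hgh]
  have hc : (⟨φ (h⁻¹ * g), hmem⟩ : K') = c := by ext; simp [hgh]
  calc _ = (Submodule.Quotient.mk (single (h * (⟨h⁻¹ * g, hmem⟩ : K'.comap φ)) 1
          ⊗ₜ single 1 1) : IndV k (K'.comap φ) (resReg k φ K')) := by simp
    _ = _ := by rw [IndV.mk_single_mul_tmul, resReg_single, mul_one, hc]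

variable (k) in
noncomputable def canMapInv (φ : H →* H') (hφ : Function.Surjective φ) (K' : Subgroup H') :
    MonoidAlgebra k H' →ₗ[k] IndV k (K'.comap φ) (resReg k φ K') :=
  (basis H' k).constr k fun h' =>
    Submodule.Quotient.mk (single (Function.surjInv hφ h') 1 ⊗ₜ single 1 1)

theorem canMapInv_single (φ : H →* H') (hφ : Function.Surjective φ) (K' : Subgroup H') (h' : H') :
    canMapInv k φ hφ K' (single h' 1)
      = Submodule.Quotient.mk (single (Function.surjInv hφ h') 1 ⊗ₜ single 1 1) :=
  (basis H' k).constr_basis k _ h'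

theorem canMapInv_comp_canMap (φ : H →* H') (hφ : Function.Surjective φ) (K' : Subgroup H') :
    canMapInv k φ hφ K' ∘ₗ canMap k φ K' = LinearMap.id :=
  IndV.hom_ext fun h c => by
    simpa [canMap_mk_single_tmul_single, canMapInv_single] using
      mk_single_tmul_single_one_of_map_eq φ K' (Function.surjInv_eq hφ (φ h * c))

theorem canMap_comp_canMapInv (φ : H →* H') (hφ : Function.Surjective φ) (K' : Subgroup H') :
    canMap k φ K' ∘ₗ canMapInv k φ hφ K' = LinearMap.id :=
  lhom_ext' fun h' => LinearMap.ext_ring <| by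
    simp [canMapInv_single, canMap_mk_single_tmul_single, Function.surjInv_eq hφ h']

theorem canMap_comp_ind (φ : H →* H') (K' : Subgroup H') (h : H) :
    canMap k φ K' ∘ₗ ind k (K'.comap φ) (resReg k φ K') h
      = regRep k H' (φ h) ∘ₗ canMap k φ K' :=
  IndV.hom_ext fun g c => by
    simp [ind_mk_single_tmul, canMap_mk_single_tmul_single, regRep_single, mul_assoc]

end

theorem canMap_bijective_equivariant
    (φ : H →* H') (hφ : Function.Surjective φ) (K' : Subgroup H') :
    Function.Bijective (canMap k φ K') ∧
      ∀ (h : H) (v : IndV k (K'.comap φ) (resReg k φ K')),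
        canMap k φ K' (ind k (K'.comap φ) (resReg k φ K') h v)
          = ((regRep k H').comp φ) h (canMap k φ K' v) :=
  ⟨Function.bijective_iff_has_inverse.2 ⟨canMapInv k φ hφ K',
      LinearMap.congr_fun (canMapInv_comp_canMap φ hφ K'),
      LinearMap.congr_fun (canMap_comp_canMapInv φ hφ K')⟩,
    fun h => LinearMap.congr_fun (canMap_comp_ind φ K' h)⟩

end Stmt6
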